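/- arXiv:1305.6018 — 6 statements merged into one kernel-verified Lean document; each statement's English description precedes it below -/
import Mathlib

section
/- For every positive integer k and every positive integer r, the weighted average S_r(k) := (1/k^{r+1}) · Σ_{j=1}^{k} j^r · c_k(j) satisfies S_r(k) = φ(k)/(2k) + (1/(r+1)) · Σ_{m=0}^{⌊r/2⌋} C(r+1, 2m) · B_{2m} · ∏_{p | k, p prime} (1 − 1/p^{2m}), where B_{2m} denote the Bernoulli numbers and φ is Euler's totient function. -/
/-!
Möbius inversion of the coprimality condition gives `c_k(j) = ∑_{d ∣ k} μ(d) (k/d) [k/d ∣ j]`,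
so `∑_{j ≤ k} j^r c_k(j) = ∑_{d ∣ k} μ(d) (k/d)^(r+1) ∑_{t ≤ d} t^r`. Faulhaber's formula expands
the inner power sum in the Bernoulli numbers `B'_i`; after dividing by `k^(r+1)` the coefficient
of `B'_i` is `∑_{d ∣ k} μ(d) / d^i = ∏_{p ∣ k} (1 - p^(-i))`. The term `i = 1` is `φ(k) / (2k)`,
the other odd terms vanish, and `B'_i = B_i` for even `i`.
-/

open Finset

/-- The Ramanujan sum `c_k(j) = ∑_{1 ≤ m ≤ k, gcd(m,k)=1} exp(2πimj/k)`. -/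
noncomputable def ramanujanSum (k : ℕ) (j : ℤ) : ℂ :=
  ∑ m ∈ (Finset.Icc 1 k).filter (fun m => Nat.gcd m k = 1),
    Complex.exp (2 * (Real.pi : ℂ) * Complex.I * (m : ℂ) * (j : ℂ) / (k : ℂ))

open ArithmeticFunction
open scoped ArithmeticFunction.Moebius

theorem sum_Icc_filter_dvd {M : Type*} [AddCommMonoid M] (f : ℕ → M) (e k : ℕ) :
    ∑ j ∈ Icc 1 k with e ∣ j, f j = ∑ t ∈ Icc 1 (k / e), f (e * t) := by
  rcases e.eq_zero_or_pos with rfl | he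
  · rw [Nat.div_zero, Icc_eq_empty_of_lt zero_lt_one, sum_empty]
    refine sum_eq_zero fun j hj => ?_
    simp only [mem_filter, mem_Icc, zero_dvd_iff] at hj
    omega
  rw [← sum_image (g := (e * ·)) fun a _ b _ h => Nat.eq_of_mul_eq_mul_left he h]
  congr 1
  ext j
  simp only [mem_filter, mem_Icc, mem_image]
  constructor
  · rintro ⟨⟨hj1, hjk⟩, t, rfl⟩
    exact ⟨t, ⟨Nat.pos_of_mul_pos_left hj1, (Nat.le_div_iff_mul_le he).2 (by linarith)⟩, rfl⟩
  · rintro ⟨t, ⟨ht1, htk⟩, rfl⟩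
    refine ⟨⟨Nat.mul_pos he ht1, ?_⟩, dvd_mul_right e t⟩
    have := (Nat.le_div_iff_mul_le he).1 htk
    linarith

theorem sum_Icc_filter_coprime_eq_sum_moebius {M : Type*} [AddCommGroup M] (f : ℕ → M) (k : ℕ) :
    ∑ m ∈ Icc 1 k with m.Coprime k, f m =
      ∑ d ∈ k.divisors, μ d • ∑ t ∈ Icc 1 (k / d), f (d * t) := by
  rcases eq_or_ne k 0 with rfl | hk
  · simp
  calc ∑ m ∈ Icc 1 k with m.Coprime k, f m
      = ∑ m ∈ Icc 1 k, ∑ d ∈ k.divisors with d ∣ m, μ d • f m := by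
        rw [sum_filter]
        refine sum_congr rfl fun m _ => ?_
        have hdiv : {d ∈ k.divisors | d ∣ m} = (m.gcd k).divisors := by
          rw [← Nat.divisors_filter_dvd_of_dvd hk (Nat.gcd_dvd_right m k)]
          exact filter_congr fun d hd => by simp [Nat.dvd_gcd_iff, Nat.dvd_of_mem_divisors hd]
        rw [← sum_smul, hdiv, ← coe_mul_zeta_apply, moebius_mul_coe_zeta, one_apply]
        split_ifs <;> simp_all [Nat.Coprime]
    _ = ∑ d ∈ k.divisors, μ d • ∑ m ∈ Icc 1 k with d ∣ m, f m := by
        simp_rw [sum_filter, smul_sum, smul_ite, smul_zero]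
        exact sum_comm
    _ = _ := by simp_rw [sum_Icc_filter_dvd]

theorem IsPrimitiveRoot.sum_Icc_zpow_pow_eq_ite {K : Type*} [Field K] {ζ : K} {n : ℕ}
    (hζ : IsPrimitiveRoot ζ n) (j : ℤ) :
    ∑ t ∈ Icc 1 n, (ζ ^ j) ^ t = if (n : ℤ) ∣ j then (n : K) else 0 := by
  have hshift : ∑ t ∈ Icc 1 n, (ζ ^ j) ^ t = ζ ^ j * ∑ t ∈ range n, (ζ ^ j) ^ t := by
    rw [← Ico_add_one_right_eq_Icc, sum_Ico_eq_sum_range, add_tsub_cancel_right, mul_sum]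
    exact sum_congr rfl fun t _ => by rw [add_comm, pow_succ']
  split_ifs with hdvd
  · rw [(hζ.zpow_eq_one_iff_dvd j).2 hdvd]
    simp
  · have hne : ζ ^ j ≠ 1 := mt (hζ.zpow_eq_one_iff_dvd j).1 hdvd
    have hpow : (ζ ^ j) ^ n = 1 := by
      rw [← zpow_natCast, ← zpow_mul, mul_comm, zpow_mul, zpow_natCast, hζ.pow_eq_one, one_zpow]
    rw [hshift, geom_sum_eq hne, hpow, sub_self, zero_div, mul_zero]

theorem IsPrimitiveRoot.sum_Icc_filter_coprime_zpow_pow_eq_sum_divisors {K : Type*} [Field K]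
    {ζ : K} {k : ℕ} (hζ : IsPrimitiveRoot ζ k) (j : ℤ) :
    ∑ m ∈ Icc 1 k with m.Coprime k, (ζ ^ j) ^ m =
      ∑ d ∈ k.divisors, μ d • if ((k / d : ℕ) : ℤ) ∣ j then ((k / d : ℕ) : K) else 0 := by
  rw [sum_Icc_filter_coprime_eq_sum_moebius]
  refine sum_congr rfl fun d hd => ?_
  have hζd := hζ.pow_of_dvd (Nat.pos_of_mem_divisors hd).ne' (Nat.dvd_of_mem_divisors hd)
  rw [← hζd.sum_Icc_zpow_pow_eq_ite j]
  congr 1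
  refine sum_congr rfl fun t _ => ?_
  simp only [← zpow_natCast, ← zpow_mul, Nat.cast_mul]
  ring_nf

theorem ramanujanSum_eq_sum_divisors {k : ℕ} (hk : k ≠ 0) (j : ℤ) :
    ramanujanSum k j =
      ∑ d ∈ k.divisors, (μ d : ℂ) * if ((k / d : ℕ) : ℤ) ∣ j then ((k / d : ℕ) : ℂ) else 0 := by
  simp_rw [← zsmul_eq_mul,
    ← (Complex.isPrimitiveRoot_exp k hk).sum_Icc_filter_coprime_zpow_pow_eq_sum_divisors j]
  refine sum_congr rfl fun m _ => ?_
  rw [← Complex.exp_int_mul, ← Complex.exp_nat_mul]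
  congr 1
  ring

theorem sum_Icc_pow_mul_ramanujanSum {k : ℕ} (hk : k ≠ 0) (r : ℕ) :
    ∑ j ∈ Icc 1 k, (j : ℂ) ^ r * ramanujanSum k j =
      ∑ d ∈ k.divisors, (μ d : ℂ) * ((k / d : ℕ) : ℂ) ^ (r + 1) * ∑ t ∈ Icc 1 d, (t : ℂ) ^ r := by
  simp_rw [ramanujanSum_eq_sum_divisors hk, mul_sum]
  rw [sum_comm]
  refine sum_congr rfl fun d hd => ?_
  have hkd : k / (k / d) = d := Nat.div_div_self (Nat.dvd_of_mem_divisors hd) hk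
  simp_rw [Int.natCast_dvd_natCast, mul_ite, mul_zero]
  rw [← sum_filter, sum_Icc_filter_dvd, hkd]
  refine sum_congr rfl fun t _ => ?_
  push_cast
  ring

theorem sum_Icc_pow_eq_bernoulli' {K : Type*} [Field K] [CharZero K] (n p : ℕ) :
    ∑ t ∈ Icc 1 n, (t : K) ^ p =
      ∑ i ∈ range (p + 1),
        (bernoulli' i : K) * (p + 1).choose i * (n : K) ^ (p + 1 - i) / (p + 1) := by
  simpa [← Ico_add_one_right_eq_Icc] using congrArg (Rat.cast : ℚ → K) (sum_Ico_pow n p)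

theorem sum_divisors_moebius_mul_eq_prod_primeFactors {R : Type*} [CommRing R]
    {f : ArithmeticFunction R} (hf : f.IsMultiplicative) {n : ℕ} (hn : n ≠ 0) :
    ∑ d ∈ n.divisors, μ d * f d = ∏ p ∈ n.primeFactors, (1 - f p) := by
  have key : pmul (μ : ArithmeticFunction R) f * (zeta : ArithmeticFunction ℕ) =
      prodPrimeFactors fun p => 1 - f p := by
    refine (IsMultiplicative.eq_iff_eq_on_prime_powers _
      ((isMultiplicative_moebius.intCast.pmul hf).mul isMultiplicative_zeta.natCast) _
      (IsMultiplicative.prodPrimeFactors _)).2 fun p i hp => ?_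
    rcases i with _ | i
    · simp [hf.map_one]
    rw [coe_mul_zeta_apply, Nat.sum_divisors_prime_pow hp, sum_range_succ',
      prodPrimeFactors_apply (pow_ne_zero _ hp.ne_zero),
      Nat.primeFactors_prime_pow i.succ_ne_zero hp, prod_singleton,
      sum_eq_single 0 (fun j _ hj => ?_) (by simp)]
    · simp [pmul_apply, moebius_apply_prime hp, hf.map_one]
      ring
    · simp [pmul_apply, moebius_apply_prime_pow hp, hj]
  have := congrArg (· n) key
  simp only [coe_mul_zeta_apply, pmul_apply, intCoe_apply, prodPrimeFactors_apply hn] at this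
  exact this

theorem sum_divisors_moebius_div_pow {K : Type*} [Field K] {n : ℕ} (hn : n ≠ 0) (i : ℕ) :
    ∑ d ∈ n.divisors, (μ d : K) / (d : K) ^ i = ∏ p ∈ n.primeFactors, (1 - 1 / (p : K) ^ i) := by
  obtain ⟨f, hf, happly⟩ : ∃ f : ArithmeticFunction K,
      f.IsMultiplicative ∧ ∀ d ≠ 0, f d = 1 / (d : K) ^ i :=
    ⟨pdiv (zeta : ArithmeticFunction ℕ) (pow i : ArithmeticFunction ℕ),
      isMultiplicative_zeta.natCast.pdiv isMultiplicative_pow.natCast,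
      fun d hd => by simp [pdiv_apply, pow_apply, hd]⟩
  rw [← prod_congr rfl fun p hp => congrArg (1 - ·) (happly p (Nat.pos_of_mem_primeFactors hp).ne'),
    ← sum_divisors_moebius_mul_eq_prod_primeFactors hf hn]
  refine sum_congr rfl fun d hd => ?_
  rw [happly d (Nat.pos_of_mem_divisors hd).ne', mul_one_div]

theorem one_div_pow_mul_sum_divisors_moebius_mul_sum_Icc_pow {K : Type*} [Field K] [CharZero K]
    {k : ℕ} (hk : k ≠ 0) (r : ℕ) :
    1 / (k : K) ^ (r + 1) *
        ∑ d ∈ k.divisors, (μ d : K) * ((k / d : ℕ) : K) ^ (r + 1) * ∑ t ∈ Icc 1 d, (t : K) ^ r =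
      ∑ i ∈ range (r + 1), (bernoulli' i : K) *
        ((r + 1).choose i / (r + 1) * ∏ p ∈ k.primeFactors, (1 - 1 / (p : K) ^ i)) := by
  have hscale : ∀ d ∈ k.divisors, ∀ i ∈ range (r + 1),
      ((k / d : ℕ) : K) ^ (r + 1) * (d : K) ^ (r + 1 - i) = (k : K) ^ (r + 1) / (d : K) ^ i := by
    intro d hd i hi
    have hd0 : (d : K) ≠ 0 := Nat.cast_ne_zero.2 (Nat.pos_of_mem_divisors hd).ne'
    rw [Nat.cast_div (Nat.dvd_of_mem_divisors hd) hd0, div_pow,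
      pow_sub₀ _ hd0 (mem_range.1 hi).le]
    field_simp
  simp_rw [sum_Icc_pow_eq_bernoulli', ← sum_divisors_moebius_div_pow hk, mul_sum]
  rw [sum_comm]
  refine sum_congr rfl fun i hi => sum_congr rfl fun d hd => ?_
  have hk0 : (k : K) ≠ 0 := Nat.cast_ne_zero.2 hk
  calc _ = (bernoulli' i : K) * ((r + 1).choose i / (r + 1)) * (μ d : K) / (k : K) ^ (r + 1) *
        (((k / d : ℕ) : K) ^ (r + 1) * (d : K) ^ (r + 1 - i)) := by ring
    _ = _ := by
      rw [hscale d hd i hi]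
      field_simp

theorem sum_range_bernoulli'_mul {K : Type*} [Field K] [CharZero K] {r : ℕ} (hr : 0 < r)
    (a : ℕ → K) :
    ∑ i ∈ range (r + 1), (bernoulli' i : K) * a i =
      a 1 / 2 + ∑ m ∈ range (r / 2 + 1), (bernoulli (2 * m) : K) * a (2 * m) := by
  rw [← sum_filter_not_add_sum_filter _ Even]
  congr 1
  · rw [sum_eq_single_of_mem 1 (by simp; omega) fun i hi hi1 => ?_]
    · simp [bernoulli'_one]
      ring
    · simp only [mem_filter, mem_range, Nat.not_even_iff_odd] at hi
      rw [bernoulli'_eq_zero_of_odd hi.2 (by obtain ⟨c, rfl⟩ := hi.2; omega), Rat.cast_zero,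
        zero_mul]
  · have heven : {i ∈ range (r + 1) | Even i} = (range (r / 2 + 1)).image (2 * ·) := by
      ext i
      simp only [mem_filter, mem_range, mem_image]
      constructor
      · rintro ⟨hi, c, rfl⟩
        exact ⟨c, by omega, by ring⟩
      · rintro ⟨m, hm, rfl⟩
        exact ⟨by omega, even_two_mul m⟩
    rw [heven, sum_image fun a _ b _ h => by simpa using h]
    exact sum_congr rfl fun m _ => by rw [bernoulli_eq_bernoulli'_of_ne_one (by omega)]

theorem weighted_average_ramanujan_sum (k r : ℕ) (hk : 0 < k) (hr : 0 < r) :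
    (1 / (k : ℂ) ^ (r + 1)) * ∑ j ∈ Finset.Icc 1 k, (j : ℂ) ^ r * ramanujanSum k j =
      (Nat.totient k : ℂ) / (2 * k) +
        (1 / ((r : ℂ) + 1)) * ∑ m ∈ Finset.range (r / 2 + 1),
          ((r + 1).choose (2 * m) : ℂ) * (bernoulli (2 * m) : ℂ) *
            ∏ p ∈ k.primeFactors, (1 - 1 / (p : ℂ) ^ (2 * m)) := by
  rw [sum_Icc_pow_mul_ramanujanSum hk.ne',
    one_div_pow_mul_sum_divisors_moebius_mul_sum_Icc_pow hk.ne', sum_range_bernoulli'_mul hr,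
    mul_sum]
  congr 1
  · have htotient : (Nat.totient k : ℂ) = k * ∏ p ∈ k.primeFactors, (1 - (p : ℂ)⁻¹) := by
      simpa using congrArg (Rat.cast : ℚ → ℂ) (Nat.totient_eq_mul_prod_factors k)
    have hk0 : (k : ℂ) ≠ 0 := Nat.cast_ne_zero.2 hk.ne'
    rw [htotient, Nat.choose_one_right]
    push_cast
    field_simp
  · exact sum_congr rfl fun m _ => by ring
end

section
/- Let f be an arbitrary arithmetic function with complex values. Then for every positive integer k, Σ_{j=1}^{k} f(gcd(j,k)) · c_k(j) = φ(k) · (μ * f)(k), where μ * f denotes the Dirichlet convolution (μ * f)(k) = Σ_{d | k} μ(d) f(k/d). -/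
/-!
Write `c_k(j) = ∑ ζ^j` over the primitive `k`-th roots of unity `ζ`. For a fixed primitive
root `ζ`, group `j ∈ [1, k]` by `g = gcd(j, k)`: the `ζ^j` with `gcd(j, k) = g` are exactly the
primitive `(k/g)`-th roots of unity, whose sum is `μ(k/g)`. Hence
`∑_j f(gcd(j, k)) ζ^j = (μ * f)(k)` for every one of the `φ(k)` primitive roots `ζ`.
The evaluation `∑ primitive n-th roots = μ(n)` is itself Möbius inversion of the same grouping
applied to `∑_{j=1}^n ζ^j = [n = 1]`.
-/

open Finset ArithmeticFunction

theorem Nat.eq_of_modEq_of_mem_Icc {a b n : ℕ} (h : a ≡ b [MOD n]) (ha : a ∈ Icc 1 n)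
    (hb : b ∈ Icc 1 n) : a = b := by
  rw [mem_Icc] at ha hb
  exact h.eq_of_abs_lt (by rw [abs_sub_lt_iff]; omega)

theorem Nat.sum_Icc_filter_gcd_eq {M : Type*} [AddCommMonoid M] {k g : ℕ} (hg : g ∣ k)
    (F : ℕ → M) :
    ∑ j ∈ Icc 1 k with j.gcd k = g, F j =
      ∑ i ∈ Icc 1 (k / g) with i.Coprime (k / g), F (g * i) := by
  obtain ⟨n, rfl⟩ := hg
  rcases g.eq_zero_or_pos with rfl | hg
  · simp
  rw [Nat.mul_div_cancel_left n hg]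
  symm
  have hgcd (i : ℕ) : (g * i).gcd (g * n) = g ↔ i.Coprime n := by
    rw [Nat.gcd_mul_left, Nat.mul_eq_left hg.ne']
  have hdvd {j : ℕ} (hj : j.gcd (g * n) = g) : g ∣ j := hj ▸ Nat.gcd_dvd_left j (g * n)
  refine sum_nbij' (g * ·) (· / g) (fun i hi => ?_) (fun j hj => ?_) (fun i _ => ?_)
    (fun j hj => ?_) (fun _ _ => rfl)
  · rw [mem_filter, mem_Icc] at hi ⊢
    exact ⟨⟨Nat.mul_pos hg hi.1.1, Nat.mul_le_mul_left g hi.1.2⟩, (hgcd i).2 hi.2⟩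
  · rw [mem_filter, mem_Icc] at hj ⊢
    obtain ⟨i, rfl⟩ := hdvd hj.2
    rw [Nat.mul_div_cancel_left i hg, ← hgcd]
    exact ⟨⟨Nat.pos_of_mul_pos_left hj.1.1, Nat.le_of_mul_le_mul_left hj.1.2 hg⟩, hj.2⟩
  · exact Nat.mul_div_cancel_left i hg
  · exact Nat.mul_div_cancel' (hdvd (mem_filter.1 hj).2)

namespace IsPrimitiveRoot

variable {R M : Type*} [CommRing R] [IsDomain R] [AddCommMonoid M] {ζ : R} {n : ℕ}

theorem sum_pow_coprime_eq_sum_primitiveRoots (h : IsPrimitiveRoot ζ n) (F : R → M) :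
    ∑ i ∈ Icc 1 n with i.Coprime n, F (ζ ^ i) = ∑ x ∈ primitiveRoots n R, F x := by
  rcases n.eq_zero_or_pos with rfl | hn
  · simp
  refine sum_nbij (ζ ^ ·) (fun i hi => ?_) (fun i hi j hj hij => ?_) (fun ξ hξ => ?_)
    (fun _ _ => rfl)
  · exact (mem_primitiveRoots hn).2 (h.pow_of_coprime i (mem_filter.1 hi).2)
  · refine Nat.eq_of_modEq_of_mem_Icc ?_ (mem_filter.1 hi).1 (mem_filter.1 hj).1
    rw [h.eq_orderOf]
    exact (h.isOfFinOrder hn.ne').pow_eq_pow_iff_modEq.1 hij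
  · have hξ' := (mem_primitiveRoots hn).1 hξ
    have : NeZero n := ⟨hn.ne'⟩
    obtain ⟨i, hin, rfl⟩ := h.eq_pow_of_pow_eq_one hξ'.pow_eq_one
    have hi := (h.pow_iff_coprime hn i).1 hξ'
    rcases i.eq_zero_or_pos with rfl | hi0
    · obtain rfl : n = 1 := (Nat.coprime_zero_left n).1 hi
      exact ⟨1, by simp, by simp [h.pow_eq_one]⟩
    · exact ⟨i, mem_filter.2 ⟨mem_Icc.2 ⟨hi0, hin.le⟩, hi⟩, rfl⟩

theorem sum_Icc_filter_gcd_eq_sum_primitiveRoots (h : IsPrimitiveRoot ζ n) {g : ℕ}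
    (hg : g ∈ n.divisors) (F : R → M) :
    ∑ j ∈ Icc 1 n with j.gcd n = g, F (ζ ^ j) = ∑ x ∈ primitiveRoots (n / g) R, F x := by
  rw [Nat.sum_Icc_filter_gcd_eq (Nat.dvd_of_mem_divisors hg)]
  simp only [pow_mul]
  exact (h.pow_of_dvd (Nat.pos_of_mem_divisors hg).ne'
    (Nat.dvd_of_mem_divisors hg)).sum_pow_coprime_eq_sum_primitiveRoots F

theorem sum_Icc_eq_sum_divisors_sum_primitiveRoots (h : IsPrimitiveRoot ζ n) (F : ℕ → R → M) :
    ∑ j ∈ Icc 1 n, F (j.gcd n) (ζ ^ j) =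
      ∑ g ∈ n.divisors, ∑ x ∈ primitiveRoots (n / g) R, F g x := by
  rcases n.eq_zero_or_pos with rfl | hn
  · simp
  rw [← sum_fiberwise_of_maps_to (g := (Nat.gcd · n))
    (fun j _ => Nat.mem_divisors.2 ⟨Nat.gcd_dvd_right j n, hn.ne'⟩)]
  refine sum_congr rfl fun g hg => ?_
  rw [← h.sum_Icc_filter_gcd_eq_sum_primitiveRoots hg]
  exact sum_congr rfl fun j hj => by rw [(mem_filter.1 hj).2]

theorem geom_sum_Icc_one (h : IsPrimitiveRoot ζ n) :
    ∑ j ∈ Icc 1 n, ζ ^ j = if n = 1 then 1 else 0 := by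
  split_ifs with hn1
  · subst hn1
    simp [IsPrimitiveRoot.one_right_iff.1 h]
  rcases n.eq_zero_or_pos with rfl | hn
  · simp
  rw [← Finset.Ico_add_one_right_eq_Icc, sum_Ico_eq_sum_range]
  simp only [pow_add, pow_one, ← mul_sum, Nat.add_sub_cancel]
  rw [h.geom_sum_eq_zero (by omega), mul_zero]

theorem sum_primitiveRoots (h : IsPrimitiveRoot ζ n) :
    ∑ x ∈ primitiveRoots n R, x = moebius n := by
  rcases n.eq_zero_or_pos with rfl | hn
  · simp
  have key := (sum_eq_iff_sum_mul_moebius_eq_on {d | d ∣ n} (fun _ _ hmd hd => hmd.trans hd)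
    (f := fun d => ∑ x ∈ primitiveRoots d R, x) (g := fun d => if d = 1 then 1 else 0)).1
    ?_ n hn dvd_rfl
  · rw [← key,
      Nat.sum_divisorsAntidiagonal' fun a b => (moebius a : R) * if b = 1 then 1 else 0]
    simp [hn.ne']
  · intro d hd0 hdn
    have hξ : IsPrimitiveRoot (ζ ^ (n / d)) d := by
      simpa [Nat.div_div_self hdn hn.ne'] using
        h.pow_of_dvd (Nat.div_pos (Nat.le_of_dvd hn hdn) hd0).ne' (Nat.div_dvd_of_dvd hdn)
    have hsplit := hξ.sum_Icc_eq_sum_divisors_sum_primitiveRoots fun _ x => x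
    rw [← hξ.geom_sum_Icc_one, hsplit,
      Nat.sum_div_divisors d fun e => ∑ x ∈ primitiveRoots e R, x]

theorem sum_Icc_gcd_mul_pow (h : IsPrimitiveRoot ζ n) (f : ℕ → R) :
    ∑ j ∈ Icc 1 n, f (j.gcd n) * ζ ^ j = ∑ d ∈ n.divisors, (moebius d : R) * f (n / d) := by
  rw [h.sum_Icc_eq_sum_divisors_sum_primitiveRoots fun g x => f g * x,
    ← Nat.sum_div_divisors n fun d => (moebius d : R) * f (n / d)]
  refine sum_congr rfl fun g hg => ?_
  obtain ⟨hgn, hn⟩ := Nat.mem_divisors.1 hg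
  rw [Nat.div_div_self hgn hn, ← mul_sum,
    (h.pow_of_dvd (Nat.pos_of_mem_divisors hg).ne' hgn).sum_primitiveRoots, mul_comm]

end IsPrimitiveRoot

theorem ramanujanSum_eq_sum_primitiveRoots (k j : ℕ) :
    ramanujanSum k j = ∑ ζ ∈ primitiveRoots k ℂ, ζ ^ j := by
  rcases k.eq_zero_or_pos with rfl | hk
  · simp [ramanujanSum]
  rw [← (Complex.isPrimitiveRoot_exp k hk.ne').sum_pow_coprime_eq_sum_primitiveRoots,
    ramanujanSum]
  refine sum_congr rfl fun m _ => ?_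
  rw [← Complex.exp_nat_mul, ← Complex.exp_nat_mul]
  congr 1
  push_cast
  ring

theorem gcd_weighted_average_ramanujan_sum_general (f : ℕ → ℂ) (k : ℕ) :
    ∑ j ∈ Finset.Icc 1 k, f (Nat.gcd j k) * ramanujanSum k j =
      (Nat.totient k : ℂ) * ∑ d ∈ k.divisors, (moebius d : ℂ) * f (k / d) := by
  calc ∑ j ∈ Icc 1 k, f (j.gcd k) * ramanujanSum k j
      = ∑ ζ ∈ primitiveRoots k ℂ, ∑ j ∈ Icc 1 k, f (j.gcd k) * ζ ^ j := by
        simp_rw [ramanujanSum_eq_sum_primitiveRoots, mul_sum]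
        exact sum_comm
    _ = ∑ ζ ∈ primitiveRoots k ℂ, ∑ d ∈ k.divisors, (moebius d : ℂ) * f (k / d) :=
        sum_congr rfl fun _ hζ =>
          (isPrimitiveRoot_of_mem_primitiveRoots hζ).sum_Icc_gcd_mul_pow f
    _ = _ := by rw [sum_const, Complex.card_primitiveRoots, nsmul_eq_mul]

theorem gcd_weighted_average_ramanujan_sum (f : ℕ → ℂ) (k : ℕ) (hk : 0 < k) :
    ∑ j ∈ Finset.Icc 1 k, f (Nat.gcd j k) * ramanujanSum k j =
      (Nat.totient k : ℂ) * ∑ d ∈ k.divisors, (moebius d : ℂ) * f (k / d) :=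
  gcd_weighted_average_ramanujan_sum_general f k
end

section
/- For every positive integer k, Σ_{j=1}^{k} gcd(j,k) · c_k(j) = (φ(k))^2, where φ is Euler's totient function. -/
/-!
Write `ζ_m = exp(2πi m/k)`, so that the sum is `∑_{gcd(m,k)=1} ∑_j gcd(j,k) ζ_m^j`. For every
primitive `k`-th root of unity `ζ`, expanding `gcd(j,k) = ∑_{d ∣ gcd(j,k)} φ(d)` turns
`∑_j gcd(j,k) ζ^j` into `∑_{d ∣ k} φ(d) ∑_{t < k/d} (ζ^d)^t`; as `ζ^d` is a primitive `(k/d)`-th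
root of unity, only `d = k` survives and the inner sum is `φ(k)`. There are `φ(k)` values of `m`.
-/

open Finset ArithmeticFunction

open scoped Nat

theorem Finset.sum_Icc_one_eq_sum_range_of_eq {M : Type*} [AddCommMonoid M] {f : ℕ → M} {n : ℕ}
    (h : f n = f 0) : ∑ i ∈ Icc 1 n, f i = ∑ i ∈ range n, f i := by
  rw [← Ico_add_one_right_eq_Icc, sum_Ico_eq_sum_range, Nat.add_sub_cancel]
  cases n with
  | zero => simp
  | succ n => rw [sum_range_succ, sum_range_succ']; simp only [add_comm 1, h]

namespace Nat

theorem filter_dvd_range_eq_image {d k : ℕ} (hdk : d ∣ k) :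
    {j ∈ range k | d ∣ j} = (range (k / d)).image (d * ·) := by
  obtain ⟨e, rfl⟩ := hdk
  rcases eq_or_ne d 0 with rfl | hd
  · simp
  ext j
  simp only [mem_filter, mem_range, mem_image, Nat.mul_div_cancel_left e (pos_of_ne_zero hd)]
  constructor
  · rintro ⟨hj, t, rfl⟩
    exact ⟨t, (Nat.mul_lt_mul_left (pos_of_ne_zero hd)).1 hj, rfl⟩
  · rintro ⟨t, ht, rfl⟩
    exact ⟨(Nat.mul_lt_mul_left (pos_of_ne_zero hd)).2 ht, t, rfl⟩

theorem gcd_eq_sum_totient_filter_dvd (j : ℕ) {k : ℕ} (hk : k ≠ 0) :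
    j.gcd k = ∑ d ∈ k.divisors with d ∣ j, φ d := by
  rw [← sum_totient (j.gcd k), ← divisors_filter_dvd_of_dvd hk (gcd_dvd_right j k)]
  refine sum_congr (filter_congr fun d hd => ?_) fun _ _ => rfl
  rw [dvd_gcd_iff, and_iff_left (dvd_of_mem_divisors hd)]

theorem card_filter_Icc_gcd_eq_one (k : ℕ) : #{m ∈ Icc 1 k | m.gcd k = 1} = φ k := by
  rw [card_filter, sum_Icc_one_eq_sum_range_of_eq (by simp), ← card_filter,
    totient_eq_card_coprime]
  simp only [Nat.gcd_comm _ k]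

end Nat

namespace IsPrimitiveRoot

variable {R : Type*} [CommRing R] [IsDomain R] {ζ : R} {k : ℕ}

theorem sum_filter_dvd_range_pow (h : IsPrimitiveRoot ζ k) {d : ℕ} (hd : d ∈ k.divisors) :
    ∑ j ∈ range k with d ∣ j, ζ ^ j = if d = k then 1 else 0 := by
  obtain ⟨⟨e, rfl⟩, hk⟩ := Nat.mem_divisors.1 hd
  have hd0 : 0 < d := Nat.pos_of_ne_zero (left_ne_zero_of_mul hk)
  rw [Nat.filter_dvd_range_eq_image (dvd_mul_right d e), Nat.mul_div_cancel_left e hd0,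
    sum_image fun _ _ _ _ => Nat.eq_of_mul_eq_mul_left hd0]
  simp_rw [pow_mul]
  split_ifs with hde
  · simp [(Nat.mul_eq_left hd0.ne').1 hde.symm]
  · refine (h.pow (Nat.pos_of_ne_zero hk) rfl).geom_sum_eq_zero ?_
    have he0 : e ≠ 0 := right_ne_zero_of_mul hk
    have he1 : e ≠ 1 := by rintro rfl; exact hde (mul_one d).symm
    omega

theorem sum_range_gcd_mul_pow (h : IsPrimitiveRoot ζ k) :
    ∑ j ∈ range k, (j.gcd k : R) * ζ ^ j = φ k := by
  rcases eq_or_ne k 0 with rfl | hk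
  · simp
  calc ∑ j ∈ range k, (j.gcd k : R) * ζ ^ j
      = ∑ j ∈ range k, ∑ d ∈ k.divisors, if d ∣ j then (φ d : R) * ζ ^ j else 0 := by
        refine sum_congr rfl fun j _ => ?_
        rw [Nat.gcd_eq_sum_totient_filter_dvd j hk, Nat.cast_sum, sum_mul, sum_filter]
    _ = ∑ d ∈ k.divisors, (φ d : R) * ∑ j ∈ range k with d ∣ j, ζ ^ j := by
        rw [sum_comm]
        simp_rw [mul_sum, sum_filter]
    _ = φ k := by
        rw [sum_congr rfl fun d hd => by rw [h.sum_filter_dvd_range_pow hd]]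
        simp [hk]

end IsPrimitiveRoot

theorem ramanujanSum_natCast (k j : ℕ) :
    ramanujanSum k j =
      ∑ m ∈ Icc 1 k with m.gcd k = 1, Complex.exp (2 * Real.pi * Complex.I * (m / k)) ^ j := by
  refine sum_congr rfl fun m _ => ?_
  rw [← Complex.exp_nat_mul]
  push_cast
  ring_nf

theorem gcd_weighted_ramanujan_sum_eq_totient_sq_general (k : ℕ) :
    ∑ j ∈ Finset.Icc 1 k, (Nat.gcd j k : ℂ) * ramanujanSum k j =
      ((Nat.totient k : ℂ)) ^ 2 := by
  rcases eq_or_ne k 0 with rfl | hk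
  · simp
  have inner (m : ℕ) (hm : m.gcd k = 1) :
      ∑ j ∈ Icc 1 k, (j.gcd k : ℂ) * Complex.exp (2 * Real.pi * Complex.I * (m / k)) ^ j =
        φ k := by
    have hζ := Complex.isPrimitiveRoot_exp_of_coprime m k hk hm
    rw [sum_Icc_one_eq_sum_range_of_eq (by simp [hζ.pow_eq_one]), hζ.sum_range_gcd_mul_pow]
  simp_rw [ramanujanSum_natCast, mul_sum]
  rw [sum_comm, sum_congr rfl fun m hm => inner m (mem_filter.1 hm).2, sum_const,
    Nat.card_filter_Icc_gcd_eq_one, nsmul_eq_mul, sq]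

theorem gcd_weighted_ramanujan_sum_eq_totient_sq (k : ℕ) (hk : 0 < k) :
    ∑ j ∈ Finset.Icc 1 k, (Nat.gcd j k : ℂ) * ramanujanSum k j =
      ((Nat.totient k : ℂ)) ^ 2 :=
  gcd_weighted_ramanujan_sum_eq_totient_sq_general k
end

section
/- For every positive integer k > 1, Σ_{d | k} (μ(d)/d) · log d = −(φ(k)/k) · Σ_{p | k, p prime} (log p)/(p − 1), where μ is the Möbius function and φ is Euler's totient function. -/
/-!
Only squarefree divisors contribute, and these are the products `∏ p ∈ t, p` over subsets `t` of
the prime factors of `k`. With `c p = -1/p` the sum becomes `∑_t (∏_{p ∈ t} c p) (∑_{p ∈ t} log p)`,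
which is the derivative at `x = 1` of `∏_p (1 + c p x ^ log p)`, i.e.
`∑_p c p log p ∏_{q ≠ p} (1 + c q)`. By Euler's product, `∏_{q ≠ p} (1 - 1/q) = (φ(k)/k) / (1 - 1/p)`.
-/

open Finset ArithmeticFunction
open scoped ArithmeticFunction.Moebius Nat

theorem Finset.sum_powerset_prod_mul_sum {ι R : Type*} [CommSemiring R] [DecidableEq ι]
    (s : Finset ι) (c L : ι → R) :
    ∑ t ∈ s.powerset, (∏ i ∈ t, c i) * ∑ i ∈ t, L i =
      ∑ i ∈ s, c i * L i * ∏ j ∈ s.erase i, (1 + c j) := by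
  simp_rw [mul_sum]
  rw [sum_comm' (t' := s) (s' := fun i => {t ∈ s.powerset | i ∈ t})]
  · refine sum_congr rfl fun i hi => ?_
    have hi' : i ∉ s.erase i := notMem_erase i s
    rw [sum_filter, ← insert_erase hi, sum_powerset_insert hi', erase_insert hi', prod_one_add,
      mul_sum]
    simp only [mem_insert_self, if_true]
    rw [sum_eq_zero fun t ht => if_neg fun h => hi' (mem_powerset.mp ht h), zero_add]
    refine sum_congr rfl fun t ht => ?_
    rw [prod_insert fun h => hi' (mem_powerset.mp ht h)]
    ring
  · simp only [mem_powerset, mem_filter]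
    exact fun t i => ⟨fun ⟨ht, hi⟩ => ⟨⟨ht, hi⟩, ht hi⟩, fun ⟨⟨ht, hi⟩, _⟩ => ⟨ht, hi⟩⟩

theorem sum_divisors_moebius_mul {R : Type*} [CommRing R] {n : ℕ} (hn : n ≠ 0) (f : ℕ → R) :
    ∑ d ∈ n.divisors, μ d * f d =
      ∑ t ∈ n.primeFactors.powerset, (-1) ^ #t * f (∏ p ∈ t, p) := by
  rw [← sum_filter_of_ne (p := Squarefree) fun d _ h =>
      moebius_ne_zero_iff_squarefree.mp fun h0 => h (by simp [h0]),
    Nat.sum_divisors_filter_squarefree hn, Nat.factors_eq]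
  refine sum_congr (by simp) fun t ht => ?_
  have hprime : ∀ p ∈ t, p.Prime := fun p hp =>
    Nat.prime_of_mem_primeFactors (mem_powerset.mp ht hp)
  rw [prod_val, Function.id_def,
    isMultiplicative_moebius.map_prod_of_subset_primeFactors n t (mem_powerset.mp ht),
    prod_congr rfl fun p hp => moebius_apply_prime (hprime p hp), prod_const]
  push_cast
  rfl

theorem neg_one_pow_card_mul_log_prod_div_prod {t : Finset ℕ} (ht : ∀ p ∈ t, p ≠ 0) :
    (-1) ^ #t * (Real.log (∏ p ∈ t, p : ℕ) / (∏ p ∈ t, p : ℕ)) =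
      (∏ p ∈ t, -(p : ℝ)⁻¹) * ∑ p ∈ t, Real.log p := by
  rw [Nat.cast_prod, Real.log_prod fun p hp => Nat.cast_ne_zero.mpr (ht p hp), prod_neg,
    prod_inv_distrib]
  ring

theorem Nat.totient_div_self_eq_prod {k : ℕ} (hk : k ≠ 0) :
    (φ k : ℝ) / k = ∏ p ∈ k.primeFactors, (1 - (p : ℝ)⁻¹) := by
  rw [div_eq_iff (Nat.cast_ne_zero.mpr hk), mul_comm]
  simpa using congrArg (Rat.cast : ℚ → ℝ) (Nat.totient_eq_mul_prod_factors k)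

theorem prod_erase_one_sub_inv {s : Finset ℕ} {p : ℕ} (hp : p ∈ s) (hp1 : 1 < p) :
    ∏ q ∈ s.erase p, (1 - (q : ℝ)⁻¹) = (∏ q ∈ s, (1 - (q : ℝ)⁻¹)) * p / (p - 1) := by
  have hp1' : (1 : ℝ) < p := Nat.one_lt_cast.mpr hp1
  rw [← mul_prod_erase s _ hp, eq_div_iff (by linarith)]
  field_simp

theorem sum_moebius_div_mul_log (k : ℕ) (hk : 1 < k) :
    ∑ d ∈ k.divisors, ((moebius d : ℝ) / (d : ℝ)) * Real.log d =
      -((Nat.totient k : ℝ) / (k : ℝ)) * ∑ p ∈ k.primeFactors, Real.log p / ((p : ℝ) - 1) := by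
  have hk0 : k ≠ 0 := by omega
  calc ∑ d ∈ k.divisors, ((moebius d : ℝ) / (d : ℝ)) * Real.log d
      = ∑ d ∈ k.divisors, (μ d : ℝ) * (Real.log d / d) := by
        simp_rw [div_mul_eq_mul_div, mul_div_assoc]
    _ = ∑ t ∈ k.primeFactors.powerset, (∏ p ∈ t, -(p : ℝ)⁻¹) * ∑ p ∈ t, Real.log p := by
        rw [sum_divisors_moebius_mul hk0]
        exact sum_congr rfl fun t ht => neg_one_pow_card_mul_log_prod_div_prod fun p hp =>
          (Nat.pos_of_mem_primeFactors (mem_powerset.mp ht hp)).ne'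
    _ = ∑ p ∈ k.primeFactors, -(p : ℝ)⁻¹ * Real.log p *
          ∏ q ∈ k.primeFactors.erase p, (1 + -(q : ℝ)⁻¹) :=
        sum_powerset_prod_mul_sum _ _ _
    _ = _ := by
        rw [Nat.totient_div_self_eq_prod hk0, mul_sum]
        refine sum_congr rfl fun p hp => ?_
        have hp1 : 1 < p := (Nat.prime_of_mem_primeFactors hp).one_lt
        have hp1' : (p : ℝ) - 1 ≠ 0 := sub_ne_zero.mpr (Nat.one_lt_cast.mpr hp1).ne'
        simp_rw [← sub_eq_add_neg]
        rw [prod_erase_one_sub_inv hp hp1]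
        field_simp
end

section
/- For every positive integer k, (1/2^k) · Σ_{j=0}^{k} C(k,j) · c_k(j) = Σ_{d | k} μ(k/d) · Σ_{ℓ=1}^{d} (−1)^{ℓk/d} · cos^k(ℓπ/d), where C(k,j) is the binomial coefficient and μ is the Möbius function. -/
/-!
With `ζ_m = exp(2πim/k)`, the binomial theorem turns the left side into `∑ ((1 + ζ_m)/2)^k` over
the `m ≤ k` coprime to `k`, that is, a sum of `h q = ((1 + exp(2πiq))/2)^k` over the reduced
fractions `q = m/k` in `(0, 1]`. Every fraction `l/d` with `1 ≤ l ≤ d` reduces uniquely to one whose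
denominator divides `d`, so `∑_{l ≤ d} h (l/d)` is the divisor sum of the sums over reduced
fractions, and Möbius inversion recovers the latter. Finally `(1 + exp(2iθ))/2 = exp(iθ) cos θ`, and
for `θ = πl/d` with `d ∣ k` the factor `exp(ikθ)` is `(-1)^(l k/d)`.
-/

open Finset ArithmeticFunction

open Complex
open scoped Real ArithmeticFunction.Moebius

theorem sum_Icc_div_eq_sum_divisors_sum_coprime {M : Type*} [AddCommMonoid M] (h : ℚ → M)
    (n : ℕ) :
    ∑ l ∈ Icc 1 n, h (l / n) =
      ∑ e ∈ n.divisors, ∑ l ∈ (Icc 1 e).filter (fun l => Nat.gcd l e = 1), h (l / e) := by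
  rw [← Nat.sum_div_divisors, sum_sigma']
  -- `l ↦ (g, l / g)` with `g = gcd l n` writes `l / n` in lowest terms as `(l / g) / (n / g)`.
  refine sum_nbij' (fun l => ⟨l.gcd n, l / l.gcd n⟩) (fun x => x.2 * x.1) ?_ ?_ ?_ ?_ ?_
  · intro l hl
    obtain ⟨hl1, hln⟩ := mem_Icc.mp hl
    have hg : 0 < l.gcd n := Nat.gcd_pos_of_pos_left n hl1
    simp only [mem_sigma, Nat.mem_divisors, mem_filter, mem_Icc]
    refine ⟨⟨Nat.gcd_dvd_right l n, by omega⟩, ⟨?_, Nat.div_le_div_right hln⟩,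
      Nat.coprime_div_gcd_div_gcd hg⟩
    exact (Nat.one_le_div_iff hg).mpr (Nat.le_of_dvd hl1 (Nat.gcd_dvd_left l n))
  · rintro ⟨g, l⟩ hx
    simp only [mem_sigma, Nat.mem_divisors, mem_filter, mem_Icc] at hx ⊢
    obtain ⟨⟨⟨c, rfl⟩, hn⟩, ⟨hl1, hlc⟩, -⟩ := hx
    have hg : 0 < g := Nat.pos_of_ne_zero (left_ne_zero_of_mul hn)
    rw [Nat.mul_div_cancel_left c hg] at hlc
    exact ⟨Nat.mul_pos hl1 hg, mul_comm g c ▸ Nat.mul_le_mul_right g hlc⟩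
  · intro l _
    exact Nat.div_mul_cancel (Nat.gcd_dvd_left l n)
  · rintro ⟨g, l⟩ hx
    simp only [mem_sigma, Nat.mem_divisors, mem_filter, mem_Icc] at hx
    obtain ⟨⟨⟨c, rfl⟩, hn⟩, -, hcop⟩ := hx
    have hg : 0 < g := Nat.pos_of_ne_zero (left_ne_zero_of_mul hn)
    rw [Nat.mul_div_cancel_left c hg] at hcop
    have hgcd : (l * g).gcd (g * c) = g := by
      rw [mul_comm g c, Nat.gcd_mul_right, hcop, one_mul]
    simp only [hgcd, Nat.mul_div_cancel _ hg]
  · intro l hl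
    have hg : 0 < l.gcd n := Nat.gcd_pos_of_pos_left n (mem_Icc.mp hl).1
    dsimp only
    rw [Nat.cast_div (Nat.gcd_dvd_left l n) (by positivity),
      Nat.cast_div (Nat.gcd_dvd_right l n) (by positivity),
      div_div_div_cancel_right₀ (by positivity)]

theorem sum_coprime_div_eq_sum_divisors_moebius {R : Type*} [NonAssocRing R] (h : ℚ → R)
    (n : ℕ) :
    ∑ l ∈ (Icc 1 n).filter (fun l => Nat.gcd l n = 1), h (l / n) =
      ∑ d ∈ n.divisors, (μ (n / d) : R) * ∑ l ∈ Icc 1 d, h (l / d) := by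
  rcases Nat.eq_zero_or_pos n with rfl | hn
  · simp
  have inversion := sum_eq_iff_sum_mul_moebius_eq.mp
    (fun m _ => (sum_Icc_div_eq_sum_divisors_sum_coprime h m).symm) n hn
  rw [← inversion,
    Nat.sum_divisorsAntidiagonal' (fun a b => (μ a : R) * ∑ l ∈ Icc 1 b, h (l / b))]

theorem one_add_exp_two_mul_I_div_two (θ : ℂ) :
    (1 + exp (2 * θ * I)) / 2 = exp (θ * I) * cos θ := by
  have h : exp (θ * I) * exp (-θ * I) = 1 := by rw [← exp_add]; simp
  rw [cos, show 2 * θ * I = θ * I + θ * I by ring, exp_add]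
  linear_combination (-1 / 2 : ℂ) * h

theorem one_add_exp_div_two_pow_eq_neg_one_pow_mul_cos_pow (k l d : ℕ) (hd : d ∣ k) :
    ((1 + exp (2 * π * I * (l / d))) / 2) ^ k =
      (-1) ^ (l * (k / d)) * (Real.cos (l * π / d) : ℂ) ^ k := by
  rcases eq_or_ne d 0 with rfl | hd0
  · simp
  obtain ⟨c, rfl⟩ := hd
  have hexp : exp (l * π / d * I) ^ (d * c) = (-1) ^ (l * c) := by
    rw [← exp_pi_mul_I, ← exp_nat_mul, ← exp_nat_mul]
    congr 1
    push_cast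
    field_simp
  rw [Nat.mul_div_cancel_left c (Nat.pos_of_ne_zero hd0), ofReal_cos,
    show 2 * π * I * (l / d) = 2 * (l * π / d : ℂ) * I by ring, one_add_exp_two_mul_I_div_two,
    mul_pow, hexp]
  norm_cast

theorem ramanujanSum_natCast_eq_sum_pow (k j : ℕ) :
    ramanujanSum k j =
      ∑ m ∈ (Icc 1 k).filter (fun m => Nat.gcd m k = 1), exp (2 * π * I * (m / k)) ^ j := by
  refine sum_congr rfl fun m _ => ?_
  rw [← exp_nat_mul]
  push_cast
  ring_nf

theorem sum_choose_mul_ramanujanSum (k : ℕ) :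
    ∑ j ∈ range (k + 1), (k.choose j : ℂ) * ramanujanSum k j =
      ∑ m ∈ (Icc 1 k).filter (fun m => Nat.gcd m k = 1), (1 + exp (2 * π * I * (m / k))) ^ k := by
  simp_rw [ramanujanSum_natCast_eq_sum_pow, mul_sum]
  rw [sum_comm]
  refine sum_congr rfl fun m _ => ?_
  rw [add_comm (1 : ℂ), add_pow]
  exact sum_congr rfl fun j _ => by ring

theorem binomial_weighted_average_ramanujan_sum_general (k : ℕ) :
    (1 / (2 : ℂ) ^ k) * ∑ j ∈ Finset.range (k + 1), (k.choose j : ℂ) * ramanujanSum k j =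
      ∑ d ∈ k.divisors, (moebius (k / d) : ℂ) *
        ∑ l ∈ Finset.Icc 1 d, (-1 : ℂ) ^ (l * (k / d)) *
          ((Real.cos ((l : ℝ) * Real.pi / (d : ℝ))) : ℂ) ^ k := by
  have inversion := sum_coprime_div_eq_sum_divisors_moebius
    (fun q : ℚ => ((1 + exp (2 * π * I * q)) / 2) ^ k) k
  push_cast at inversion
  rw [sum_choose_mul_ramanujanSum, mul_sum]
  simp_rw [one_div_mul_eq_div, ← div_pow]
  rw [inversion]
  exact sum_congr rfl fun d hd => congrArg _ <| sum_congr rfl fun l _ =>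
    one_add_exp_div_two_pow_eq_neg_one_pow_mul_cos_pow k l d (Nat.dvd_of_mem_divisors hd)

theorem binomial_weighted_average_ramanujan_sum (k : ℕ) (hk : 0 < k) :
    (1 / (2 : ℂ) ^ k) * ∑ j ∈ Finset.range (k + 1), (k.choose j : ℂ) * ramanujanSum k j =
      ∑ d ∈ k.divisors, (moebius (k / d) : ℂ) *
        ∑ l ∈ Finset.Icc 1 d, (-1 : ℂ) ^ (l * (k / d)) *
          ((Real.cos ((l : ℝ) * Real.pi / (d : ℝ))) : ℂ) ^ k :=
  binomial_weighted_average_ramanujan_sum_general k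
end

section
/- Let n be a positive integer, let k_1, …, k_n be positive integers and let k := lcm(k_1, …, k_n). Then (1/k^2) · Σ_{j=1}^{k} j · c_{k_1}(j) ⋯ c_{k_n}(j) = (φ(k_1) ⋯ φ(k_n))/(2k) + E(k_1, …, k_n)/2, where E(k_1, …, k_n) := (1/k) · Σ_{j=1}^{k} c_{k_1}(j) ⋯ c_{k_n}(j). -/
/-!
Ramanujan sums depend only on `j mod k` and are even in `j` (reflect `m ↦ k - m`), so for
`k ∣ K` one has `c_k(K - j) = c_k(j)` and `c_k(K) = c_k(0) = φ(k)`. Hence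
`P(j) = ∏ c_{kᵢ}(j)` is symmetric under `j ↦ K - j` on `0..K`, and pairing `j` with `K - j`
gives `2 ∑_{j=0}^{K} j P(j) = K ∑_{j=0}^{K} P(j)`; the extra term `P(0) = P(K) = ∏ φ(kᵢ)`
produces the totient product.
-/

open Finset ArithmeticFunction

open Complex Real

theorem ramanujanSum_add_mul_self (k : ℕ) (j t : ℤ) :
    ramanujanSum k (j + t * k) = ramanujanSum k j := by
  refine sum_congr rfl fun m hm => ?_
  have hk : (k : ℂ) ≠ 0 := by
    have hm_mem := mem_Icc.mp (mem_filter.mp hm).1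
    exact_mod_cast (by omega : k ≠ 0)
  calc exp (2 * π * I * m * ↑(j + t * k) / k)
      = exp (2 * π * I * m * j / k + ↑(m * t) * (2 * π * I)) := by
        push_cast; field_simp
    _ = exp (2 * π * I * m * j / k) := exp_periodic.int_mul _ _

theorem card_filter_Icc_gcd_eq_one (k : ℕ) :
    #{m ∈ Icc 1 k | Nat.gcd m k = 1} = Nat.totient k := by
  rw [← Nat.filter_coprime_Ico_eq_totient k 1, add_comm, Ico_add_one_right_eq_Icc]
  simp only [Nat.coprime_comm, Nat.Coprime]

theorem ramanujanSum_zero (k : ℕ) : ramanujanSum k 0 = Nat.totient k := by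
  simp [ramanujanSum, card_filter_Icc_gcd_eq_one]

theorem ramanujanSum_intCast_mul_self (k : ℕ) (t : ℤ) :
    ramanujanSum k (t * k) = Nat.totient k := by
  simpa [ramanujanSum_zero] using ramanujanSum_add_mul_self k 0 t

theorem ramanujanSum_one (j : ℤ) : ramanujanSum 1 j = 1 := by
  simpa using ramanujanSum_intCast_mul_self 1 j

theorem sub_mem_filter_Icc_gcd_eq_one {k m : ℕ} (hk : 2 ≤ k)
    (hm : m ∈ (Icc 1 k).filter (fun m => Nat.gcd m k = 1)) :
    k - m ∈ (Icc 1 k).filter (fun m => Nat.gcd m k = 1) := by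
  simp only [mem_filter, mem_Icc] at hm ⊢
  obtain ⟨⟨hm1, hmk⟩, hcop⟩ := hm
  have hm_ne : m ≠ k := by rintro rfl; rw [Nat.gcd_self] at hcop; omega
  exact ⟨⟨by omega, by omega⟩, by rwa [Nat.gcd_self_sub_left hmk]⟩

theorem ramanujanSum_neg (k : ℕ) (j : ℤ) : ramanujanSum k (-j) = ramanujanSum k j := by
  rcases lt_or_ge k 2 with hk | hk
  · interval_cases k
    · simp [ramanujanSum]
    · rw [ramanujanSum_one, ramanujanSum_one]
  have hle (m : ℕ) (hm : m ∈ (Icc 1 k).filter (fun m => Nat.gcd m k = 1)) : m ≤ k :=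
    (mem_Icc.mp (mem_filter.mp hm).1).2
  refine sum_nbij' (k - ·) (k - ·) (fun m hm ↦ sub_mem_filter_Icc_gcd_eq_one hk hm)
    (fun m hm ↦ sub_mem_filter_Icc_gcd_eq_one hk hm) (fun m hm ↦ Nat.sub_sub_self (hle m hm))
    (fun m hm ↦ Nat.sub_sub_self (hle m hm)) fun m hm ↦ ?_
  have hk0 : (k : ℂ) ≠ 0 := by exact_mod_cast (by omega : k ≠ 0)
  calc exp (2 * π * I * m * ↑(-j) / k)
      = exp (2 * π * I * ↑(k - m) * j / k + ↑(-j) * (2 * π * I)) := by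
        congr 1
        push_cast [Nat.cast_sub (hle m hm)]
        field_simp
        ring
    _ = exp (2 * π * I * ↑(k - m) * j / k) := exp_periodic.int_mul _ _

theorem ramanujanSum_natCast_sub_of_dvd {k K : ℕ} (hkK : k ∣ K) (j : ℤ) :
    ramanujanSum k (K - j) = ramanujanSum k j := by
  obtain ⟨t, rfl⟩ := hkK
  rw [← ramanujanSum_neg k j, ← ramanujanSum_add_mul_self k (-j) t]
  push_cast
  ring_nf

theorem ramanujanSum_natCast_of_dvd {k K : ℕ} (hkK : k ∣ K) :
    ramanujanSum k K = Nat.totient k := by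
  simpa [ramanujanSum_zero] using ramanujanSum_natCast_sub_of_dvd hkK 0

theorem two_mul_sum_range_mul_of_reflect {R : Type*} [CommRing R] {K : ℕ} {f : ℕ → R}
    (hf : ∀ j ≤ K, f (K - j) = f j) :
    2 * ∑ j ∈ range (K + 1), (j : R) * f j = K * ∑ j ∈ range (K + 1), f j := by
  have hreflect : ∑ j ∈ range (K + 1), (j : R) * f j
      = ∑ j ∈ range (K + 1), ((K : R) - j) * f j := by
    rw [← sum_range_reflect]
    refine sum_congr rfl fun j hj => ?_
    have hjK : j ≤ K := Nat.lt_succ_iff.mp (mem_range.mp hj)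
    rw [add_tsub_cancel_right, hf j hjK, Nat.cast_sub hjK]
  calc 2 * ∑ j ∈ range (K + 1), (j : R) * f j
      = ∑ j ∈ range (K + 1), ((j : R) * f j + ((K : R) - j) * f j) := by
        rw [sum_add_distrib, ← hreflect, two_mul]
    _ = K * ∑ j ∈ range (K + 1), f j := by
        rw [mul_sum]
        exact sum_congr rfl fun _ _ => by ring

theorem two_mul_sum_Icc_mul_of_reflect {R : Type*} [CommRing R] {K : ℕ} {f : ℕ → R}
    (hf : ∀ j ≤ K, f (K - j) = f j) :
    2 * ∑ j ∈ Icc 1 K, (j : R) * f j = K * (∑ j ∈ Icc 1 K, f j + f K) := by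
  have hsplit (g : ℕ → R) : ∑ j ∈ range (K + 1), g j = g 0 + ∑ j ∈ Icc 1 K, g j := by
    rw [Nat.range_succ_eq_Icc_zero, ← insert_Icc_add_one_left_eq_Icc K.zero_le,
      sum_insert (by simp), zero_add]
  have h := two_mul_sum_range_mul_of_reflect hf
  have hf0 : f 0 = f K := by simpa using hf K le_rfl
  rw [hsplit, hsplit, hf0, Nat.cast_zero, zero_mul, zero_add, add_comm (f K)] at h
  exact h

theorem multivariable_weighted_average_ramanujan_sum_r_one_general
    (n : ℕ) (k : Fin n → ℕ) (K : ℕ) (hK : K = Finset.univ.lcm k) :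
    (1 / (K : ℂ) ^ 2) * ∑ j ∈ Finset.Icc 1 K, (j : ℂ) * ∏ i, ramanujanSum (k i) j =
      (∏ i, (Nat.totient (k i) : ℂ)) / (2 * K) +
        ((1 / (K : ℂ)) * ∑ j ∈ Finset.Icc 1 K, ∏ i, ramanujanSum (k i) j) / 2 := by
  rcases eq_or_ne K 0 with rfl | hK0
  · simp
  have hdvd (i : Fin n) : k i ∣ K := hK ▸ dvd_lcm (mem_univ i)
  have hreflect : ∀ j ≤ K, ∏ i, ramanujanSum (k i) ↑(K - j) = ∏ i, ramanujanSum (k i) j :=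
    fun j hj => prod_congr rfl fun i _ => by
      rw [Nat.cast_sub hj, ramanujanSum_natCast_sub_of_dvd (hdvd i)]
  have htop : ∏ i, ramanujanSum (k i) K = ∏ i, (Nat.totient (k i) : ℂ) :=
    prod_congr rfl fun i _ => ramanujanSum_natCast_of_dvd (hdvd i)
  have key :=
    two_mul_sum_Icc_mul_of_reflect (f := fun j : ℕ ↦ ∏ i, ramanujanSum (k i) j) hreflect
  rw [htop] at key
  field_simp
  linear_combination key

theorem multivariable_weighted_average_ramanujan_sum_r_one (n : ℕ) (hn : 0 < n)
    (k : Fin n → ℕ) (hk : ∀ i, 0 < k i) (K : ℕ) (hK : K = Finset.univ.lcm k) :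
    (1 / (K : ℂ) ^ 2) * ∑ j ∈ Finset.Icc 1 K, (j : ℂ) * ∏ i, ramanujanSum (k i) j =
      (∏ i, (Nat.totient (k i) : ℂ)) / (2 * K) +
        ((1 / (K : ℂ)) * ∑ j ∈ Finset.Icc 1 K, ∏ i, ramanujanSum (k i) j) / 2 :=
  multivariable_weighted_average_ramanujan_sum_r_one_general n k K hK
end
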